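/- If Γ is an admissible Galois structure, then the functor I : C → X preserves pullbacks along trivial coverings; in particular, the pullback of a trivial covering along any morphism of C is again a trivial covering. -/

import Mathlib

open CategoryTheory CategoryTheory.Limits

universe v₁ v₂ u₁ u₂

namespace GaloisPaper

/-- A Galois structure `Γ = (C, X, H, I, η, ε, E, F)`. -/
structure GaloisStructure (C : Type u₁) [Category.{v₁} C] (X : Type u₂) [Category.{v₂} X] where
  I : C ⥤ X
  H : X ⥤ C
  adj : I ⊣ H
  fib : MorphismProperty C
  fibX : MorphismProperty X
  fib_of_iso : ∀ {A B : C} (f : A ⟶ B), IsIso f → fib f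
  fibX_of_iso : ∀ {A B : X} (f : A ⟶ B), IsIso f → fibX f
  fib_pullback : ∀ {A B Z : C} (f : A ⟶ B) (g : Z ⟶ B), fib f →
    ∃ (P : C) (p₁ : P ⟶ A) (p₂ : P ⟶ Z), IsPullback p₁ p₂ f g ∧ fib p₂
  fibX_pullback : ∀ {A B Z : X} (f : A ⟶ B) (g : Z ⟶ B), fibX f →
    ∃ (P : X) (p₁ : P ⟶ A) (p₂ : P ⟶ Z), IsPullback p₁ p₂ f g ∧ fibX p₂
  fib_comp : ∀ {A B Z : C} (f : A ⟶ B) (g : B ⟶ Z), fib f → fib g → fib (f ≫ g)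
  fibX_comp : ∀ {A B Z : X} (f : A ⟶ B) (g : B ⟶ Z), fibX f → fibX g → fibX (f ≫ g)
  H_fib : ∀ {A B : X} (f : A ⟶ B), fibX f → fib (H.map f)
  I_fib : ∀ {A B : C} (f : A ⟶ B), fib f → fibX (I.map f)

namespace GaloisStructure

variable {C : Type u₁} [Category.{v₁} C] {X : Type u₂} [Category.{v₂} X]
variable (Γ : GaloisStructure C X)

/-- A trivial covering: a fibration whose `η`-naturality square is a pullback. -/
def TrivialCovering {A B : C} (f : A ⟶ B) : Prop :=
  Γ.fib f ∧ IsPullback (Γ.adj.unit.app A) f ((Γ.I ⋙ Γ.H).map f) (Γ.adj.unit.app B)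

/-- The full subcategory `(E ↓ B)` of the slice category over `B` given by fibrations. -/
abbrev SliceFib (B : C) := ObjectProperty.FullSubcategory (fun f : Over B => Γ.fib f.hom)

/-- The full subcategory `(F ↓ Y)` of the slice category over `Y : X` given by
morphisms of the class `F`. -/
abbrev SliceFibX (Y : X) := ObjectProperty.FullSubcategory (fun f : Over Y => Γ.fibX f.hom)

/-- Composition with a fibration `p : E ⟶ B`, as a functor `(E ↓ E) ⥤ (E ↓ B)`;
the pullback functor `p*` is its right adjoint. -/
def compAlong {E B : C} (p : E ⟶ B) (hp : Γ.fib p) : Γ.SliceFib E ⥤ Γ.SliceFib B :=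
  ObjectProperty.lift _ (ObjectProperty.ι _ ⋙ Over.map p)
    (fun f => Γ.fib_comp _ _ f.property hp)

/-- A monadic extension: a fibration `p` whose pullback functor
`p* : (E ↓ B) ⥤ (E ↓ E)` (i.e. the right adjoint of composition with `p`) is monadic. -/
def MonadicExtension {E B : C} (p : E ⟶ B) : Prop :=
  ∃ hp : Γ.fib p, ∃ pstar : Γ.SliceFib B ⥤ Γ.SliceFib E,
    Nonempty (Γ.compAlong p hp ⊣ pstar) ∧ Nonempty (MonadicRightAdjoint pstar)

/-- A covering (central extension): a fibration whose pullback along some monadic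
extension is a trivial covering. -/
def Covering {A B : C} (f : A ⟶ B) : Prop :=
  Γ.fib f ∧ ∃ (E : C) (p : E ⟶ B), Γ.MonadicExtension p ∧
    ∃ (P : C) (q : P ⟶ A) (r : P ⟶ E), IsPullback q r f p ∧ Γ.TrivialCovering r

/-- A normal extension: a monadic extension whose kernel pair projections are
trivial coverings. -/
def NormalExtension {E B : C} (p : E ⟶ B) : Prop :=
  Γ.MonadicExtension p ∧ ∃ (R : C) (d c : R ⟶ E), IsPullback d c p p ∧
    Γ.TrivialCovering d ∧ Γ.TrivialCovering c

/-- The restriction `I^B : (E ↓ B) ⥤ (F ↓ I B)` of the reflection `I`. -/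
def restrictI (B : C) : Γ.SliceFib B ⥤ Γ.SliceFibX (Γ.I.obj B) :=
  ObjectProperty.lift _ (ObjectProperty.ι _ ⋙ Over.post Γ.I)
    (fun f => Γ.I_fib _ f.property)

/-- Admissibility of a Galois structure: each `H^B`, i.e. each right adjoint of
`I^B : (E ↓ B) ⥤ (F ↓ I B)`, is full and faithful. -/
def Admissible : Prop :=
  ∀ B : C, ∃ (HB : Γ.SliceFibX (Γ.I.obj B) ⥤ Γ.SliceFib B) (_ : Γ.restrictI B ⊣ HB),
    HB.Full ∧ HB.Faithful

/-- Pullback-stability of monadic extensions: the pullback of a monadic extension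
along any morphism exists and is again a monadic extension. -/
def MonStable : Prop :=
  ∀ {E B Z : C} (p : E ⟶ B) (g : Z ⟶ B), Γ.MonadicExtension p →
    ∃ (P : C) (q : P ⟶ E) (r : P ⟶ Z), IsPullback q r p g ∧ Γ.MonadicExtension r

/-- A weakly universal normal extension of `B`. -/
def WeaklyUniversal {U B : C} (u : U ⟶ B) : Prop :=
  Γ.NormalExtension u ∧ ∀ {E : C} (p : E ⟶ B), Γ.NormalExtension p → ∃ e : U ⟶ E, e ≫ p = u

/-- The category `NExt_Γ(C)` of normal extensions, a full subcategory of the arrow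
category of `C`. -/
abbrev NExtCat := ObjectProperty.FullSubcategory (fun f : Arrow C => Γ.NormalExtension f.hom)

/-- The category `Ext_Γ(C)` of monadic extensions, a full subcategory of the arrow
category of `C`. -/
abbrev ExtCat := ObjectProperty.FullSubcategory (fun f : Arrow C => Γ.MonadicExtension f.hom)

/-- The codomain functor `NExt_Γ(C) ⥤ C`. -/
def codF : Γ.NExtCat ⥤ C := ObjectProperty.ι _ ⋙ Arrow.rightFunc

/-- The codomain functor `Ext_Γ(C) ⥤ C`. -/
def codExt : Γ.ExtCat ⥤ C := ObjectProperty.ι _ ⋙ Arrow.rightFunc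

/-- The inclusion `NExt_Γ(C) ⥤ Ext_Γ(C)`: every normal extension is monadic. -/
def inclNExt : Γ.NExtCat ⥤ Γ.ExtCat :=
  ObjectProperty.lift _ (ObjectProperty.ι _) (fun p => p.property.1)

end GaloisStructure

end GaloisPaper

/-! Since `f` is a trivial covering, `A` is the pullback of `HI f` along `η_B`; pasting with
the pullback `P` of `f` along `g`, and using that `H` preserves the pullback `Q` of `I f` along
`I g`, exhibits `r : P ⟶ Z` as the pullback of `H p₂ : HQ ⟶ HIZ` along `η_Z`, i.e. as
`H^Z(p₂)`. Admissibility makes the counit `I^Z H^Z(p₂) ⟶ p₂` invertible, so the comparison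
`IP ⟶ Q` is an isomorphism. This says both that `I` preserves the pullback and that the
`η`-square of `r` is isomorphic to the pullback square defining `H^Z(p₂)`. -/

namespace CategoryTheory.Adjunction

variable {C : Type u₁} [Category.{v₁} C] {X : Type u₂} [Category.{v₂} X]
variable {I : C ⥤ X} {H : X ⥤ C}

theorem homEquiv_symm_comp_eq_map (adj : I ⊣ H) {P Z : C} {Q : X} {φ : P ⟶ H.obj Q}
    {u : P ⟶ Z} {p : Q ⟶ I.obj Z} (w : φ ≫ H.map p = u ≫ adj.unit.app Z) :
    (adj.homEquiv P Q).symm φ ≫ p = I.map u := by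
  rw [← adj.homEquiv_naturality_right_symm, w, adj.homEquiv_naturality_left_symm]
  simp

/-- A pullback `r` of `H p` along `η_Z` is the value at `p` of a right adjoint of
`I^Z : C/Z ⥤ X/IZ`, with counit the transpose of the upper side. -/
theorem existsUnique_of_isPullback_unit (adj : I ⊣ H) {P Z : C} {Q : X} {φ : P ⟶ H.obj Q}
    {r : P ⟶ Z} {p : Q ⟶ I.obj Z} (hs : IsPullback φ r (H.map p) (adj.unit.app Z))
    {a : C} (u : a ⟶ Z) (t : I.obj a ⟶ Q) (ht : t ≫ p = I.map u) :
    ∃! h : a ⟶ P, h ≫ r = u ∧ I.map h ≫ (adj.homEquiv P Q).symm φ = t := by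
  have transpose : ∀ h : a ⟶ P, I.map h ≫ (adj.homEquiv P Q).symm φ = t ↔
      h ≫ φ = adj.homEquiv a Q t := fun h => by
    rw [← adj.homEquiv_naturality_left_symm, Equiv.symm_apply_eq]
  have w : adj.homEquiv a Q t ≫ H.map p = u ≫ adj.unit.app Z := by
    rw [← adj.homEquiv_naturality_right, ht, Adjunction.homEquiv_unit, adj.unit_naturality]
  refine ⟨hs.lift _ _ w, ⟨hs.lift_snd _ _ w, (transpose _).2 (hs.lift_fst _ _ w)⟩, ?_⟩
  rintro h ⟨hr, hφ⟩
  exact hs.hom_ext (by rw [(transpose h).1 hφ, hs.lift_fst]) (by rw [hr, hs.lift_snd])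

theorem isIso_of_existsUnique (adj : I ⊣ H) [H.Full] [H.Faithful] {x : C} {y : X}
    (m : I.obj x ⟶ y)
    (hm : ∀ (a : C) (t : I.obj a ⟶ y), ∃! h : a ⟶ x, I.map h ≫ m = t) :
    IsIso m := by
  set ψ := adj.homEquiv x y m
  have hψ : I.map ψ ≫ adj.counit.app y = m :=
    (adj.homEquiv_counit _ _ ψ).symm.trans ((adj.homEquiv x y).symm_apply_apply m)
  -- `(x, m)` and `(H y, ε_y)` are both terminal in `I ↓ y`, and `ε_y` is invertible
  obtain ⟨χ, hχ, -⟩ := hm (H.obj y) (adj.counit.app y)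
  have hψχ : ψ ≫ χ = 𝟙 x := (hm x m).unique
    (by rw [Functor.map_comp, Category.assoc, hχ, hψ]) (by rw [Functor.map_id, Category.id_comp])
  have hχψ : χ ≫ ψ = 𝟙 (H.obj y) := by
    apply (adj.homEquiv _ _).symm.injective
    rw [Adjunction.homEquiv_counit, Adjunction.homEquiv_counit, Functor.map_comp,
      Category.assoc, hψ, hχ, Functor.map_id, Category.id_comp]
  have : IsIso ψ := ⟨χ, hψχ, hχψ⟩
  rw [← hψ]
  infer_instance

theorem exists_isPullback_unit (adj : I ⊣ H) {P A B Z : C} {f : A ⟶ B} {g : Z ⟶ B}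
    {q : P ⟶ A} {r : P ⟶ Z} (hpb : IsPullback q r f g)
    (hf : IsPullback (adj.unit.app A) f (H.map (I.map f)) (adj.unit.app B))
    {Q : X} {p₁ : Q ⟶ I.obj A} {p₂ : Q ⟶ I.obj Z}
    (hQ : IsPullback p₁ p₂ (I.map f) (I.map g)) :
    ∃ φ : P ⟶ H.obj Q, φ ≫ H.map p₁ = q ≫ adj.unit.app A ∧
      IsPullback φ r (H.map p₂) (adj.unit.app Z) := by
  have := adj.rightAdjoint_preservesLimits
  have hHQ := hQ.map H
  have outer : IsPullback (q ≫ adj.unit.app A) r (H.map (I.map f))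
      (adj.unit.app Z ≫ H.map (I.map g)) := by
    simpa only [adj.unit_naturality] using hpb.paste_horiz hf
  refine ⟨hHQ.lift _ (r ≫ adj.unit.app Z) (by rw [outer.w, Category.assoc]),
    hHQ.lift_fst _ _ _, ?_⟩
  exact IsPullback.of_right (by rwa [hHQ.lift_fst]) (hHQ.lift_snd _ _ _) hHQ

end CategoryTheory.Adjunction

namespace GaloisPaper
namespace GaloisStructure

variable {C : Type u₁} [Category.{v₁} C] {X : Type u₂} [Category.{v₂} X]
variable (Γ : GaloisStructure C X)

theorem fib_of_isPullback {P A B Z : C} {f : A ⟶ B} {g : Z ⟶ B} {q : P ⟶ A} {r : P ⟶ Z}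
    (hpb : IsPullback q r f g) (hf : Γ.fib f) : Γ.fib r := by
  obtain ⟨P', q', r', hpb', hr'⟩ := Γ.fib_pullback f g hf
  rw [← hpb.isoIsPullback_hom_snd A Z hpb']
  exact Γ.fib_comp _ _ (Γ.fib_of_iso _ inferInstance) hr'

theorem isIso_homEquiv_symm_of_isPullback_unit (hadm : Γ.Admissible) {P Z : C} {Q : X}
    {φ : P ⟶ Γ.H.obj Q} {r : P ⟶ Z} {p : Q ⟶ Γ.I.obj Z} (hr : Γ.fib r) (hp : Γ.fibX p)
    (hs : IsPullback φ r (Γ.H.map p) (Γ.adj.unit.app Z)) :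
    IsIso ((Γ.adj.homEquiv P Q).symm φ) := by
  obtain ⟨HZ, adjZ, _, _⟩ := hadm Z
  let m : (Γ.restrictI Z).obj ⟨Over.mk r, hr⟩ ⟶ ⟨Over.mk p, hp⟩ :=
    ObjectProperty.homMk (Over.homMk _ (Γ.adj.homEquiv_symm_comp_eq_map hs.w))
  have : IsIso m := adjZ.isIso_of_existsUnique m fun a t => by
    obtain ⟨h, ⟨hr', ht⟩, huniq⟩ :=
      Γ.adj.existsUnique_of_isPullback_unit hs a.obj.hom t.hom.left (Over.w t.hom)
    refine ⟨ObjectProperty.homMk (Over.homMk h hr'), ?_, fun h' hh' => ?_⟩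
    · ext
      exact ht
    · ext
      exact huniq _ ⟨Over.w h'.hom, congrArg (fun k => k.hom.left) hh'⟩
  exact (ObjectProperty.ι _ ⋙ Over.forget _).map_isIso m

/-- Lemma 2.4, [JK, Proposition 2.4].
If `Γ` is an admissible Galois structure, then the reflection `I : C ⥤ X` preserves
pullbacks along trivial coverings; in particular, the pullback of a trivial covering
along any morphism of `C` is again a trivial covering. -/
theorem I_preserves_pullbacks_along_trivialCoverings
    (Γ : GaloisStructure C X) (hadm : Γ.Admissible)
    {P A B Z : C} (f : A ⟶ B) (g : Z ⟶ B) (q : P ⟶ A) (r : P ⟶ Z)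
    (hpb : IsPullback q r f g) (hf : Γ.TrivialCovering f) :
    IsPullback (Γ.I.map q) (Γ.I.map r) (Γ.I.map f) (Γ.I.map g) ∧
    Γ.TrivialCovering r := by
  obtain ⟨hf, hfη⟩ := hf
  have hr := Γ.fib_of_isPullback hpb hf
  obtain ⟨Q, p₁, p₂, hQ, hp₂⟩ := Γ.fibX_pullback _ _ (Γ.I_fib f hf)
  obtain ⟨φ, hφ₁, hφ⟩ := Γ.adj.exists_isPullback_unit hpb hfη hQ
  set e := (Γ.adj.homEquiv P Q).symm φ
  have : IsIso e := Γ.isIso_homEquiv_symm_of_isPullback_unit hadm hr hp₂ hφ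
  have he₁ : e ≫ p₁ = Γ.I.map q := Γ.adj.homEquiv_symm_comp_eq_map hφ₁
  have he₂ : e ≫ p₂ = Γ.I.map r := Γ.adj.homEquiv_symm_comp_eq_map hφ.w
  have hφe : Γ.adj.unit.app P ≫ Γ.H.map e = φ :=
    (Γ.adj.homEquiv_unit _ _ e).symm.trans ((Γ.adj.homEquiv P Q).apply_symm_apply φ)
  refine ⟨?_, hr, ?_⟩
  · exact hQ.of_iso (asIso e).symm (Iso.refl _) (Iso.refl _) (Iso.refl _)
      (by simp [← he₁]) (by simp [← he₂]) (by simp) (by simp)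
  · exact hφ.of_iso (Iso.refl _) (asIso (Γ.H.map e)).symm (Iso.refl _) (Iso.refl _)
      (by simp [← hφe]) (by simp) (by simp [← he₂]) (by simp)

end GaloisStructure
end GaloisPaper
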